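/- arXiv:2002.12924 — 6 statements merged into one kernel-verified Lean document; each statement's English description precedes it below -/
import Mathlib

section
/- For every real exponent $\tilde\gamma < -1/2$ there exists a constant $N = N(\tilde\gamma)$ such that for every $u \in L^2(0,1)$ one has $\sum_{k=1}^{\infty} \|u e^k\|_{H^{\tilde\gamma}}^2 \le N \|u\|_{L^2(0,1)}^2$, where $e^k(x) = \sqrt{2}\sin(\pi k x)$ and $\|v\|_{H^{\tilde\gamma}}^2 = \sum_{l=1}^\infty (\pi l)^{2\tilde\gamma} |(v, e^l)_{L^2}|^2$. Moreover one may take $N(-1) = 1/3$. -/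
/-!
Since `(u eᵏ, eˡ) = (u eˡ, eᵏ)`, Bessel's inequality for the orthonormal family `(eᵏ)` gives
`∑ₖ (u eᵏ, eˡ)² ≤ ‖u eˡ‖² ≤ 2 ‖u‖²` for each `l`, because `|eˡ| ≤ √2`. Exchanging the two sums
(all terms are nonnegative) yields the bound with `N = 2 ∑ₗ (π l)^(2γ)`, finite exactly when
`2γ < -1`; for `γ = -1` this is `2 ζ(2) / π² = 1/3`.
-/

open MeasureTheory Set

noncomputable def ek (k : ℕ) (x : ℝ) : ℝ := Real.sqrt 2 * Real.sin (Real.pi * (k + 1) * x)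

noncomputable def ip (v : ℝ → ℝ) (k : ℕ) : ℝ := ∫ x in Ioo (0:ℝ) 1, v x * ek k x

noncomputable def HnormSq (γ : ℝ) (v : ℝ → ℝ) : ℝ :=
  ∑' l : ℕ, (Real.pi * (l + 1)) ^ (2 * γ) * (ip v l) ^ 2

open Real

section Bessel

variable {α ι : Type*} [MeasurableSpace α] {μ : Measure α} {e : ι → α → ℝ} {f : α → ℝ}

lemma inner_toLp_eq_integral_mul {g : α → ℝ} (hf : MemLp f 2 μ) (hg : MemLp g 2 μ) :
    inner ℝ (hf.toLp f) (hg.toLp g) = ∫ x, f x * g x ∂μ := by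
  rw [L2.inner_def]
  refine integral_congr_ae ?_
  filter_upwards [hf.coeFn_toLp, hg.coeFn_toLp] with x hfx hgx
  simp [hfx, hgx, mul_comm]

lemma orthonormal_toLp [DecidableEq ι] (he : ∀ i, MemLp (e i) 2 μ)
    (horth : ∀ i j, ∫ x, e i x * e j x ∂μ = if i = j then 1 else 0) :
    Orthonormal ℝ fun i => (he i).toLp (e i) := by
  rw [orthonormal_iff_ite]
  intro i j
  rw [inner_toLp_eq_integral_mul, horth]

lemma norm_inner_toLp_sq (he : ∀ i, MemLp (e i) 2 μ) (hf : MemLp f 2 μ) (i : ι) :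
    ‖inner ℝ ((he i).toLp (e i)) (hf.toLp f)‖ ^ 2 = (∫ x, f x * e i x ∂μ) ^ 2 := by
  simp only [inner_toLp_eq_integral_mul, Real.norm_eq_abs, sq_abs, mul_comm (e i _)]

lemma summable_sq_integral_mul [DecidableEq ι] (he : ∀ i, MemLp (e i) 2 μ)
    (horth : ∀ i j, ∫ x, e i x * e j x ∂μ = if i = j then 1 else 0) (hf : MemLp f 2 μ) :
    Summable fun i => (∫ x, f x * e i x ∂μ) ^ 2 := by
  simpa only [norm_inner_toLp_sq he hf] using
    (orthonormal_toLp he horth).inner_products_summable (hf.toLp f)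

lemma tsum_sq_integral_mul_le [DecidableEq ι] (he : ∀ i, MemLp (e i) 2 μ)
    (horth : ∀ i j, ∫ x, e i x * e j x ∂μ = if i = j then 1 else 0) (hf : MemLp f 2 μ) :
    ∑' i, (∫ x, f x * e i x ∂μ) ^ 2 ≤ ∫ x, f x ^ 2 ∂μ := by
  have hbessel := (orthonormal_toLp he horth).tsum_inner_products_le (hf.toLp f)
  simp only [norm_inner_toLp_sq he hf] at hbessel
  rw [← real_inner_self_eq_norm_sq, inner_toLp_eq_integral_mul hf hf] at hbessel
  simpa only [sq] using hbessel

end Bessel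

lemma integral_cos_int_mul_pi (n : ℤ) :
    ∫ x in (0:ℝ)..1, cos (n * π * x) = if n = 0 then 1 else 0 := by
  split_ifs with hn
  · simp [hn]
  · have hc : (n : ℝ) * π ≠ 0 := mul_ne_zero (Int.cast_ne_zero.mpr hn) pi_ne_zero
    rw [intervalIntegral.integral_comp_mul_left (fun x => cos x) hc]
    simp [integral_cos, sin_int_mul_pi]

lemma ek_mul_ek (k l : ℕ) (x : ℝ) :
    ek k x * ek l x = cos (((k : ℤ) - l : ℤ) * π * x) - cos (((k : ℤ) + l + 2 : ℤ) * π * x) := by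
  have hsqrt : √2 * √2 = 2 := mul_self_sqrt zero_le_two
  have hsub : (((k : ℤ) - l : ℤ) : ℝ) * π * x = π * (k + 1) * x - π * (l + 1) * x := by
    push_cast; ring
  have hadd : (((k : ℤ) + l + 2 : ℤ) : ℝ) * π * x = π * (k + 1) * x + π * (l + 1) * x := by
    push_cast; ring
  rw [hsub, hadd, ← two_mul_sin_mul_sin, ek, ek]
  linear_combination (sin (π * (k + 1) * x) * sin (π * (l + 1) * x)) * hsqrt

lemma integral_ek_mul_ek (k l : ℕ) :
    ∫ x in Ioo (0:ℝ) 1, ek k x * ek l x = if k = l then 1 else 0 := by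
  have hcos : ∀ n : ℤ, IntervalIntegrable (fun x => cos (n * π * x)) volume 0 1 := fun n =>
    (continuous_cos.comp (continuous_const.mul continuous_id)).intervalIntegrable 0 1
  rw [← integral_Ioc_eq_integral_Ioo, ← intervalIntegral.integral_of_le zero_le_one]
  simp_rw [ek_mul_ek]
  rw [intervalIntegral.integral_sub (hcos _) (hcos _), integral_cos_int_mul_pi,
    integral_cos_int_mul_pi]
  have : ((k : ℤ) + l + 2) ≠ 0 := by omega
  simp [this, sub_eq_zero]

lemma abs_ek_le (k : ℕ) (x : ℝ) : |ek k x| ≤ √2 := by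
  rw [ek, abs_mul, abs_of_nonneg (sqrt_nonneg 2)]
  exact mul_le_of_le_one_right (sqrt_nonneg 2) (abs_sin_le_one _)

lemma ek_sq_le (k : ℕ) (x : ℝ) : ek k x ^ 2 ≤ 2 := by
  simpa using sq_le_sq' (neg_le_of_abs_le (abs_ek_le k x)) (le_of_abs_le (abs_ek_le k x))

lemma continuous_ek (k : ℕ) : Continuous (ek k) := by
  unfold ek; fun_prop

lemma memLp_ek (k : ℕ) : MemLp (ek k) 2 (volume.restrict (Ioo (0:ℝ) 1)) :=
  .of_bound (continuous_ek k).aestronglyMeasurable √2 (.of_forall (abs_ek_le k))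

lemma memLp_mul_ek {u : ℝ → ℝ} (hu : MemLp u 2 (volume.restrict (Ioo (0:ℝ) 1))) (k : ℕ) :
    MemLp (fun x => u x * ek k x) 2 (volume.restrict (Ioo (0:ℝ) 1)) :=
  hu.of_le_mul (c := √2) (hu.aestronglyMeasurable.mul (continuous_ek k).aestronglyMeasurable)
    (.of_forall fun x => by
      rw [norm_mul, mul_comm √2, Real.norm_eq_abs (ek k x)]
      exact mul_le_mul_of_nonneg_left (abs_ek_le k x) (norm_nonneg _))

lemma integral_sq_mul_ek_le {u : ℝ → ℝ} (hu : MemLp u 2 (volume.restrict (Ioo (0:ℝ) 1))) (k : ℕ) :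
    ∫ x in Ioo (0:ℝ) 1, (u x * ek k x) ^ 2 ≤ 2 * ∫ x in Ioo (0:ℝ) 1, u x ^ 2 := by
  rw [← integral_const_mul]
  refine integral_mono (memLp_mul_ek hu k).integrable_sq (hu.integrable_sq.const_mul 2) fun x => ?_
  rw [mul_pow, mul_comm 2]
  exact mul_le_mul_of_nonneg_left (ek_sq_le k x) (sq_nonneg _)

lemma ip_mul_ek_comm (u : ℝ → ℝ) (k l : ℕ) :
    ip (fun x => u x * ek k x) l = ∫ x in Ioo (0:ℝ) 1, (u x * ek l x) * ek k x := by
  simp only [ip, mul_right_comm]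

lemma tsum_tsum_le_of_nonneg {β γ : Type*} {F : β → γ → ℝ} {c : β → ℝ} (hF : ∀ b g, 0 ≤ F b g)
    (hrow : ∀ b, Summable (F b)) (hle : ∀ b, ∑' g, F b g ≤ c b) (hc : Summable c) :
    ∑' g, ∑' b, F b g ≤ ∑' b, c b := by
  have hsum : Summable fun b => ∑' g, F b g :=
    hc.of_nonneg_of_le (fun b => tsum_nonneg (hF b)) hle
  have hprod : Summable (Function.uncurry F) :=
    (summable_prod_of_nonneg fun p => hF p.1 p.2).mpr ⟨hrow, hsum⟩
  rw [hprod.tsum_comm]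
  exact hsum.tsum_le_tsum hle hc

lemma summable_pi_mul_succ_rpow {γ : ℝ} (hγ : γ < -1/2) :
    Summable fun l : ℕ => (π * (l + 1)) ^ (2 * γ) := by
  have hsucc : Summable fun l : ℕ => ((l + 1 : ℕ) : ℝ) ^ (2 * γ) :=
    (summable_nat_add_iff 1).mpr (Real.summable_nat_rpow.mpr (by linarith))
  refine (hsucc.mul_left (π ^ (2 * γ))).congr fun l => ?_
  rw [← mul_rpow pi_pos.le (by positivity)]
  push_cast; rfl

lemma tsum_pi_mul_succ_rpow_neg_two : ∑' l : ℕ, (π * (l + 1)) ^ (2 * (-1 : ℝ)) = 1 / 6 := by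
  have hzeta : HasSum (fun l : ℕ => 1 / ((l + 1 : ℕ) : ℝ) ^ 2) (π ^ 2 / 6) :=
    (hasSum_nat_add_iff (f := fun n : ℕ => 1 / (n : ℝ) ^ 2) 1).mpr (by simpa using hasSum_zeta_two)
  have hterm : ∀ l : ℕ, (π * (l + 1)) ^ (2 * (-1 : ℝ)) = (π ^ 2)⁻¹ * (1 / ((l + 1 : ℕ) : ℝ) ^ 2) := by
    intro l
    rw [show 2 * (-1 : ℝ) = ((-2 : ℤ) : ℝ) by norm_num, rpow_intCast]
    push_cast
    field_simp
  simp_rw [hterm]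
  rw [tsum_mul_left, hzeta.tsum_eq]
  field_simp

lemma tsum_HnormSq_mul_ek_le {γ : ℝ} (hw : Summable fun l : ℕ => (π * (l + 1)) ^ (2 * γ))
    {u : ℝ → ℝ} (hu : MemLp u 2 (volume.restrict (Ioo (0:ℝ) 1))) :
    ∑' k : ℕ, HnormSq γ (fun x => u x * ek k x) ≤
      (2 * ∑' l : ℕ, (π * (l + 1)) ^ (2 * γ)) * ∫ x in Ioo (0:ℝ) 1, u x ^ 2 := by
  have hrow (l : ℕ) : Summable fun k => ip (fun x => u x * ek k x) l ^ 2 := by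
    simpa only [ip_mul_ek_comm] using
      summable_sq_integral_mul memLp_ek integral_ek_mul_ek (memLp_mul_ek hu l)
  have hrow_le (l : ℕ) :
      ∑' k, ip (fun x => u x * ek k x) l ^ 2 ≤ 2 * ∫ x in Ioo (0:ℝ) 1, u x ^ 2 := by
    simp only [ip_mul_ek_comm]
    exact (tsum_sq_integral_mul_le memLp_ek integral_ek_mul_ek (memLp_mul_ek hu l)).trans
      (integral_sq_mul_ek_le hu l)
  calc ∑' k : ℕ, HnormSq γ (fun x => u x * ek k x)
      = ∑' (k : ℕ) (l : ℕ), (π * (l + 1)) ^ (2 * γ) * ip (fun x => u x * ek k x) l ^ 2 := rfl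
    _ ≤ ∑' l : ℕ, (π * (l + 1)) ^ (2 * γ) * (2 * ∫ x in Ioo (0:ℝ) 1, u x ^ 2) := by
      refine tsum_tsum_le_of_nonneg (fun l k => by positivity) (fun l => (hrow l).mul_left _)
        (fun l => ?_) (hw.mul_right _)
      rw [tsum_mul_left]
      exact mul_le_mul_of_nonneg_left (hrow_le l) (by positivity)
    _ = _ := by rw [tsum_mul_right]; ring

theorem stmt0 (γ : ℝ) (hγ : γ < -1/2) :
    (∃ N : ℝ, ∀ u : ℝ → ℝ, MemLp u 2 (volume.restrict (Ioo (0:ℝ) 1)) →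
      ∑' k : ℕ, HnormSq γ (fun x => u x * ek k x) ≤ N * ∫ x in Ioo (0:ℝ) 1, (u x) ^ 2) ∧
    (∀ u : ℝ → ℝ, MemLp u 2 (volume.restrict (Ioo (0:ℝ) 1)) →
      ∑' k : ℕ, HnormSq (-1) (fun x => u x * ek k x) ≤ (1/3) * ∫ x in Ioo (0:ℝ) 1, (u x) ^ 2) := by
  refine ⟨⟨_, fun u hu => tsum_HnormSq_mul_ek_le (summable_pi_mul_succ_rpow hγ) hu⟩, fun u hu => ?_⟩
  have h := tsum_HnormSq_mul_ek_le (summable_pi_mul_succ_rpow (γ := -1) (by norm_num)) hu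
  rwa [tsum_pi_mul_succ_rpow_neg_two, show 2 * (1 / 6 : ℝ) = 1 / 3 by norm_num] at h
end

section
/- Let $f, g \in C^1(\mathbb{R})$ satisfy $f' = (g')^2$. Then for all real numbers $a, b$ one has $(a - b)(f(a) - f(b)) \ge |g(a) - g(b)|^2$. -/
open intervalIntegral MeasureTheory

/-- A scalar lemma: if `2*D ≤ l*I + L/l` for all `l > 0`, with `D, I, L ≥ 0`,
then `D^2 ≤ L*I`. -/
lemma aux_quad {D I L : ℝ} (hD : 0 ≤ D) (hI : 0 ≤ I) (hL : 0 ≤ L)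
    (h : ∀ l : ℝ, 0 < l → 2 * D ≤ l * I + L / l) : D ^ 2 ≤ L * I := by
  rcases eq_or_lt_of_le hD with hD0 | hD0
  · nlinarith
  rcases eq_or_lt_of_le hI with hI0 | hI0
  · -- I = 0 : show D ≤ 0, contradiction
    exfalso
    have := h ((L + 1) / D) (by positivity)
    rw [← hI0] at this
    have hLd : L / ((L + 1) / D) = L * D / (L + 1) := by
      field_simp
    rw [hLd] at this
    have hdd : L * D / (L + 1) < 2 * D := by
      rw [div_lt_iff₀ (by positivity)]
      nlinarith
    linarith
  · have hkey := h (D / I) (by positivity)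
    have hLd : L / (D / I) = L * I / D := by
      field_simp
    have hDI : D / I * I = D := div_mul_cancel₀ _ (ne_of_gt hI0)
    rw [hLd, hDI] at hkey
    have h2 : D ≤ L * I / D := by linarith
    rw [le_div_iff₀ hD0] at h2
    nlinarith

lemma aux_main (f f' g g' : ℝ → ℝ)
    (hf : ∀ r : ℝ, HasDerivAt f (f' r) r) (hg : ∀ r : ℝ, HasDerivAt g (g' r) r)
    (hf'c : Continuous f') (hg'c : Continuous g')
    (hfg : ∀ r : ℝ, f' r = (g' r) ^ 2) (a b : ℝ) (hab : b ≤ a) :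
    |g a - g b| ^ 2 ≤ (a - b) * (f a - f b) := by
  have hfint : IntervalIntegrable f' volume b a := hf'c.intervalIntegrable _ _
  have hgint : IntervalIntegrable g' volume b a := hg'c.intervalIntegrable _ _
  have hF : ∫ s in b..a, f' s = f a - f b :=
    integral_eq_sub_of_hasDerivAt (fun x _ => hf x) hfint
  have hG : ∫ s in b..a, g' s = g a - g b :=
    integral_eq_sub_of_hasDerivAt (fun x _ => hg x) hgint
  set D := |g a - g b| with hDdef
  set I := f a - f b with hIdef
  set L := a - b with hLdef
  have hL0 : 0 ≤ L := by simp [hLdef]; linarith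
  have hI0 : 0 ≤ I := by
    rw [← hF]
    apply intervalIntegral.integral_nonneg hab
    intro x _
    rw [hfg]; positivity
  have key : ∀ l : ℝ, 0 < l → 2 * D ≤ l * I + L / l := by
    intro l hl
    have h1 : D ≤ ∫ s in b..a, |g' s| := by
      rw [hDdef, ← hG]
      exact intervalIntegral.abs_integral_le_integral_abs hab
    have h2 : ∫ s in b..a, |g' s| ≤ ∫ s in b..a, (l * (g' s) ^ 2 + 1 / l) / 2 := by
      apply intervalIntegral.integral_mono_on hab (hgint.abs)
      · apply IntervalIntegrable.div_const
        apply IntervalIntegrable.add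
        · exact (continuous_const.mul (hg'c.pow 2)).intervalIntegrable _ _
        · exact intervalIntegrable_const
      · intro x _
        have habs : (g' x) ^ 2 = |g' x| ^ 2 := (sq_abs _).symm
        have hinv : 1 / l * l = 1 := by field_simp
        rw [le_div_iff₀ (by norm_num : (0:ℝ) < 2), habs]
        have key : |g' x| * 2 * l ≤ (l * |g' x| ^ 2 + 1 / l) * l := by
          nlinarith [sq_nonneg (l * |g' x| - 1)]
        exact le_of_mul_le_mul_right key hl
    have h3 : (∫ s in b..a, (l * (g' s) ^ 2 + 1 / l) / 2) = (l * I + L / l) / 2 := by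
      have : ∀ s, (l * (g' s) ^ 2 + 1 / l) / 2 = l / 2 * f' s + (1 / l / 2) := by
        intro s; rw [hfg]; ring
      simp_rw [this]
      rw [intervalIntegral.integral_add (hfint.const_mul _) intervalIntegrable_const,
        intervalIntegral.integral_const_mul, hF, intervalIntegral.integral_const]
      rw [hIdef, hLdef]
      simp [smul_eq_mul]
      ring
    linarith [h1.trans (h2.trans_eq h3)]
  exact aux_quad (abs_nonneg _) hI0 hL0 key

theorem stmt4 (f f' g g' : ℝ → ℝ)
    (hf : ∀ r : ℝ, HasDerivAt f (f' r) r) (hg : ∀ r : ℝ, HasDerivAt g (g' r) r)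
    (hf'c : Continuous f') (hg'c : Continuous g')
    (hfg : ∀ r : ℝ, f' r = (g' r) ^ 2) :
    ∀ a b : ℝ, |g a - g b| ^ 2 ≤ (a - b) * (f a - f b) := by
  intro a b
  rcases le_total b a with h | h
  · exact aux_main f f' g g' hf hg hf'c hg'c hfg a b h
  · have := aux_main f f' g g' hf hg hf'c hg'c hfg b a h
    rw [abs_sub_comm] at this
    calc |g a - g b| ^ 2 ≤ (b - a) * (f b - f a) := this
      _ = (a - b) * (f a - f b) := by ring
end

section
/- Let $m > 1$. For all real numbers $a, b$ one has $(a - b)(a^{[m]} - b^{[m]}) \ge \frac{4m}{(m+1)^2} \big| a^{[(m+1)/2]} - b^{[(m+1)/2]} \big|^2$, where $r^{[p]} := |r|^{p-1} r$. -/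
/-!
Pointwise Stroock–Varopoulos: if `f' = (g')²`, then by the fundamental theorem of calculus and
Cauchy–Schwarz on the interval between `b` and `a`,
`(g a - g b)² = (∫ g')² ≤ (a - b) ∫ (g')² = (a - b) (f a - f b)`.
Here `f r = r^[m]` and `g r = 2√m/(m+1) r^[(m+1)/2]`, whose derivatives are `m |r|^(m-1)` and
`√m |r|^((m-1)/2)`.
-/

noncomputable def opow (r p : ℝ) : ℝ := |r| ^ (p - 1) * r

open intervalIntegral

lemma hasDerivAt_opow {p : ℝ} (hp : 1 < p) (x : ℝ) :
    HasDerivAt (fun r => opow r p) (p * |x| ^ (p - 1)) x := by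
  have hcont : Continuous fun r : ℝ => |r| ^ (p - 1) :=
    continuous_abs.rpow_const fun _ => Or.inr (by linarith)
  refine hasDerivAt_of_hasDerivAt_of_ne' (g := fun r => p * |r| ^ (p - 1)) (x := 0)
    (fun y hy => ?_) (hcont.mul continuous_id).continuousAt
    (continuous_const.mul hcont).continuousAt x
  have hy' : |y| ≠ 0 := abs_ne_zero.mpr hy
  refine (((hasDerivAt_abs hy).rpow_const (p := p - 1) (Or.inl hy')).mul
    (hasDerivAt_id y)).congr_deriv ?_
  have hsign : (SignType.sign y : ℝ) * y = |y| := by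
    rcases hy.lt_or_gt with h | h <;> simp [h, abs_of_neg, abs_of_pos]
  have hpow : |y| ^ (p - 1 - 1) * |y| = |y| ^ (p - 1) := by
    rw [← Real.rpow_add_one hy']; ring_nf
  simp only [id]
  linear_combination (p - 1) * hpow + (p - 1) * |y| ^ (p - 1 - 1) * hsign

lemma sq_integral_le_mul_integral_sq {f : ℝ → ℝ} (hf : Continuous f) (a b : ℝ) :
    (∫ x in b..a, f x) ^ 2 ≤ (a - b) * ∫ x in b..a, f x ^ 2 := by
  wlog hba : b ≤ a generalizing a b
  · have := this b a (le_of_not_ge hba)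
    rw [integral_symm a b, integral_symm a b]
    linarith
  set L := a - b
  set J := ∫ x in b..a, f x
  set S := ∫ x in b..a, f x ^ 2
  have hnonneg : 0 ≤ ∫ x in b..a, (L * f x - J) ^ 2 :=
    integral_nonneg hba fun x _ => sq_nonneg _
  have hexpand : ∫ x in b..a, (L * f x - J) ^ 2 = L * (L * S - J ^ 2) := by
    have hf1 : IntervalIntegrable f MeasureTheory.volume b a := hf.intervalIntegrable _ _
    have hf2 : IntervalIntegrable (fun x => f x ^ 2) MeasureTheory.volume b a :=
      (hf.pow 2).intervalIntegrable _ _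
    have hpoint : ∀ x, (L * f x - J) ^ 2 = L ^ 2 * f x ^ 2 - 2 * L * J * f x + J ^ 2 :=
      fun x => by ring
    simp_rw [hpoint]
    rw [integral_add ((hf2.const_mul _).sub (hf1.const_mul _)) intervalIntegrable_const,
      integral_sub (hf2.const_mul _) (hf1.const_mul _), integral_const_mul, integral_const_mul,
      integral_const, smul_eq_mul]
    ring
  rcases hba.lt_or_eq with h | h
  · nlinarith [sub_pos.mpr h]
  · simp [h, J, S]

theorem sq_sub_le_mul_sub_of_hasDerivAt_sq {f g g' : ℝ → ℝ}
    (hf : ∀ x, HasDerivAt f (g' x ^ 2) x) (hg : ∀ x, HasDerivAt g (g' x) x)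
    (hg' : Continuous g') (a b : ℝ) :
    (g a - g b) ^ 2 ≤ (a - b) * (f a - f b) := by
  rw [← integral_eq_sub_of_hasDerivAt (fun x _ => hf x) ((hg'.pow 2).intervalIntegrable _ _),
    ← integral_eq_sub_of_hasDerivAt (fun x _ => hg x) (hg'.intervalIntegrable _ _)]
  exact sq_integral_le_mul_integral_sq hg' a b

theorem stmt5 (m : ℝ) (hm : 1 < m) (a b : ℝ) :
    4 * m / (m + 1) ^ 2 * |opow a ((m + 1) / 2) - opow b ((m + 1) / 2)| ^ 2
      ≤ (a - b) * (opow a m - opow b m) := by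
  set c := (m + 1) / 2 with hc_def
  have hc : 1 < c := by linarith
  have hm0 : 0 < m := by linarith
  have hg (x : ℝ) : HasDerivAt (fun r => 2 * √m / (m + 1) * opow r c)
      (√m * |x| ^ (c - 1)) x :=
    ((hasDerivAt_opow hc x).const_mul _).congr_deriv (by field_simp; ring)
  have hf (x : ℝ) : HasDerivAt (fun r => opow r m) ((√m * |x| ^ (c - 1)) ^ 2) x := by
    refine (hasDerivAt_opow hm x).congr_deriv ?_
    rw [mul_pow, Real.sq_sqrt hm0.le, ← Real.rpow_natCast, ← Real.rpow_mul (abs_nonneg x), hc_def]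
    ring_nf
  have hg' : Continuous fun x : ℝ => √m * |x| ^ (c - 1) :=
    continuous_const.mul (continuous_abs.rpow_const fun _ => Or.inr (by linarith))
  calc 4 * m / (m + 1) ^ 2 * |opow a c - opow b c| ^ 2
      = (2 * √m / (m + 1) * opow a c - 2 * √m / (m + 1) * opow b c) ^ 2 := by
        rw [sq_abs, ← mul_sub, mul_pow, div_pow, mul_pow, Real.sq_sqrt hm0.le]; ring
    _ ≤ (a - b) * (opow a m - opow b m) := sq_sub_le_mul_sub_of_hasDerivAt_sq hf hg hg' a b
end

section
/- Let $\tilde\gamma \in (0, 1/2)$, $\tilde m \in (1, \infty)$, and let $u : (0,1) \to \mathbb{R}$ be measurable with $u^{[\tilde m]} \in W^{\tilde\gamma, 2}(0,1)$ (Sobolev–Slobodeckij space). Then $u \in W^{\tilde\gamma/\tilde m, 2\tilde m}(0,1)$ and there is a constant $N = N(\tilde m)$ such that $\|u\|_{W^{\tilde\gamma/\tilde m, 2\tilde m}}^{2\tilde m} \le N \|u^{[\tilde m]}\|_{W^{\tilde\gamma, 2}}^{2}$. -/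
open MeasureTheory Set

noncomputable def slob (γ p : ℝ) (v : ℝ → ℝ) : ENNReal :=
  (∫⁻ x in Ioo (0:ℝ) 1, ENNReal.ofReal (|v x| ^ p)) +
    ∫⁻ z in (Ioo (0:ℝ) 1) ×ˢ (Ioo (0:ℝ) 1),
      ENNReal.ofReal (|v z.1 - v z.2| ^ p / |z.1 - z.2| ^ (1 + γ * p))

/-! Both terms of the Sobolev–Slobodeckij norm are compared pointwise. The `L^{2m}` term of `u`
is the `L²` term of `u^{[m]}` since `|u^{[m]}| = |u|^m`, and the exponent `γ/m` is chosen so that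
the two Gagliardo kernels `|x - y|^{-(1 + γ/m · 2m)}` and `|x - y|^{-(1 + 2γ)}` coincide. What
remains is the elementary inequality `|a - b|^m ≤ 2^{m-1} |a^{[m]} - b^{[m]}|` for `m ≥ 1`:
for `a, b` of equal sign it follows from superadditivity of `t ↦ t^m`, and for `a, b` of
opposite sign from convexity, `(|a| + |b|)^m ≤ 2^{m-1} (|a|^m + |b|^m)`. -/

namespace Real

lemma rpow_add_le_mul_rpow_add_rpow {a b p : ℝ} (ha : 0 ≤ a) (hb : 0 ≤ b) (hp : 1 ≤ p) :
    (a + b) ^ p ≤ 2 ^ (p - 1) * (a ^ p + b ^ p) := by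
  lift a to NNReal using ha
  lift b to NNReal using hb
  exact_mod_cast NNReal.rpow_add_le_mul_rpow_add_rpow a b hp

lemma sub_rpow_le_rpow_sub_rpow {a b p : ℝ} (hb : 0 ≤ b) (hba : b ≤ a) (hp : 1 ≤ p) :
    (a - b) ^ p ≤ a ^ p - b ^ p := by
  have := add_rpow_le_rpow_add (sub_nonneg.2 hba) hb hp
  rw [sub_add_cancel] at this
  linarith

end Real

lemma opow_of_nonneg {r : ℝ} (hr : 0 ≤ r) {p : ℝ} (hp : p ≠ 0) : opow r p = r ^ p := by
  rcases hr.eq_or_lt with rfl | hr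
  · simp [opow, Real.zero_rpow hp]
  · rw [opow, abs_of_pos hr, ← Real.rpow_add_one hr.ne', sub_add_cancel]

lemma opow_neg (r p : ℝ) : opow (-r) p = -opow r p := by
  simp [opow]

lemma abs_opow (r : ℝ) {p : ℝ} (hp : p ≠ 0) : |opow r p| = |r| ^ p := by
  rcases le_total 0 r with hr | hr
  · rw [opow_of_nonneg hr hp, abs_of_nonneg hr, abs_of_nonneg (Real.rpow_nonneg hr p)]
  · rw [← neg_neg r, opow_neg, abs_neg, abs_neg, opow_of_nonneg (neg_nonneg.2 hr) hp,
      abs_of_nonneg (neg_nonneg.2 hr), abs_of_nonneg (Real.rpow_nonneg (neg_nonneg.2 hr) p)]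

lemma abs_sub_rpow_le_of_nonneg {a b m : ℝ} (hm : 1 ≤ m) (hb : 0 ≤ b) (hba : b ≤ a) :
    |a - b| ^ m ≤ 2 ^ (m - 1) * |opow a m - opow b m| := by
  have hm0 : m ≠ 0 := by linarith
  have hmono : b ^ m ≤ a ^ m := Real.rpow_le_rpow hb hba (by linarith)
  have htwo : (1 : ℝ) ≤ 2 ^ (m - 1) := Real.one_le_rpow one_le_two (by linarith)
  rw [opow_of_nonneg (hb.trans hba) hm0, opow_of_nonneg hb hm0, abs_of_nonneg (sub_nonneg.2 hba),
    abs_of_nonneg (sub_nonneg.2 hmono)]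
  calc (a - b) ^ m ≤ a ^ m - b ^ m := Real.sub_rpow_le_rpow_sub_rpow hb hba hm
    _ ≤ 2 ^ (m - 1) * (a ^ m - b ^ m) := le_mul_of_one_le_left (sub_nonneg.2 hmono) htwo

lemma abs_sub_rpow_le_of_nonpos_of_nonneg {a b m : ℝ} (hm : 1 ≤ m) (hb : b ≤ 0) (ha : 0 ≤ a) :
    |a - b| ^ m ≤ 2 ^ (m - 1) * |opow a m - opow b m| := by
  have hm0 : m ≠ 0 := by linarith
  have hb' : 0 ≤ -b := neg_nonneg.2 hb
  have hopow_b : opow b m = -(-b) ^ m := by rw [← opow_of_nonneg hb' hm0, opow_neg, neg_neg]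
  rw [opow_of_nonneg ha hm0, hopow_b, sub_neg_eq_add,
    abs_of_nonneg (add_nonneg (Real.rpow_nonneg ha m) (Real.rpow_nonneg hb' m)),
    abs_of_nonneg (by linarith : 0 ≤ a - b), sub_eq_add_neg]
  exact Real.rpow_add_le_mul_rpow_add_rpow ha hb' hm

lemma abs_sub_rpow_le_of_le {a b m : ℝ} (hm : 1 ≤ m) (hba : b ≤ a) :
    |a - b| ^ m ≤ 2 ^ (m - 1) * |opow a m - opow b m| := by
  rcases le_total 0 b with hb | hb
  · exact abs_sub_rpow_le_of_nonneg hm hb hba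
  rcases le_total 0 a with ha | ha
  · exact abs_sub_rpow_le_of_nonpos_of_nonneg hm hb ha
  · have := abs_sub_rpow_le_of_nonneg hm (neg_nonneg.2 ha) (neg_le_neg hba)
    rwa [opow_neg, opow_neg, neg_sub_neg, neg_sub_neg] at this

lemma abs_sub_rpow_le (a b : ℝ) {m : ℝ} (hm : 1 ≤ m) :
    |a - b| ^ m ≤ 2 ^ (m - 1) * |opow a m - opow b m| := by
  rcases le_total b a with hba | hab
  · exact abs_sub_rpow_le_of_le hm hba
  · rw [abs_sub_comm, abs_sub_comm (opow a m)]
    exact abs_sub_rpow_le_of_le hm hab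

lemma abs_sub_rpow_two_mul_le (a b : ℝ) {m : ℝ} (hm : 1 ≤ m) :
    |a - b| ^ (2 * m) ≤ 4 ^ (m - 1) * |opow a m - opow b m| ^ (2 : ℝ) :=
  calc |a - b| ^ (2 * m) = (|a - b| ^ m) ^ 2 := by
        rw [mul_comm, Real.rpow_mul (abs_nonneg _), Real.rpow_two]
    _ ≤ (2 ^ (m - 1) * |opow a m - opow b m|) ^ 2 :=
        pow_le_pow_left₀ (Real.rpow_nonneg (abs_nonneg _) m) (abs_sub_rpow_le a b hm) 2
    _ = 4 ^ (m - 1) * |opow a m - opow b m| ^ (2 : ℝ) := by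
        rw [Real.rpow_two, mul_pow, sq (2 ^ (m - 1) : ℝ), ← Real.mul_rpow (by norm_num) (by norm_num)]
        norm_num

lemma slob_div_le_opow (γ : ℝ) {m : ℝ} (hm : 1 ≤ m) (u : ℝ → ℝ) :
    slob (γ / m) (2 * m) u ≤ ENNReal.ofReal (4 ^ (m - 1)) * slob γ 2 (fun x => opow (u x) m) := by
  have hm0 : m ≠ 0 := by linarith
  have hC : (1 : ENNReal) ≤ ENNReal.ofReal (4 ^ (m - 1)) :=
    ENNReal.one_le_ofReal.2 (Real.one_le_rpow (by norm_num) (by linarith))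
  have hLp : ∀ x, |u x| ^ (2 * m) = |opow (u x) m| ^ (2 : ℝ) := fun x => by
    rw [abs_opow _ hm0, ← Real.rpow_mul (abs_nonneg _), mul_comm]
  have hkernel : 1 + γ / m * (2 * m) = 1 + γ * 2 := by field_simp
  rw [slob, slob, mul_add]
  refine add_le_add ?_ ?_
  · simp only [hLp]
    exact le_mul_of_one_le_left zero_le hC
  · rw [← lintegral_const_mul' _ _ ENNReal.ofReal_ne_top]
    refine lintegral_mono fun z => ?_
    rw [hkernel, ← ENNReal.ofReal_mul (Real.rpow_nonneg (by norm_num) _), ← mul_div_assoc]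
    exact ENNReal.ofReal_le_ofReal (div_le_div_of_nonneg_right
      (abs_sub_rpow_two_mul_le _ _ hm) (Real.rpow_nonneg (abs_nonneg _) _))

theorem stmt8 (tm : ℝ) (htm : 1 < tm) :
    ∃ N : ENNReal, N < ⊤ ∧ ∀ tγ : ℝ, tγ ∈ Ioo (0:ℝ) (1/2) → ∀ u : ℝ → ℝ,
      slob tγ 2 (fun x => opow (u x) tm) < ⊤ →
      slob (tγ / tm) (2 * tm) u ≤ N * slob tγ 2 (fun x => opow (u x) tm) :=
  ⟨ENNReal.ofReal (4 ^ (tm - 1)), ENNReal.ofReal_lt_top,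
    fun tγ _ u _ => slob_div_le_opow tγ htm.le u⟩
end

section
/- Let $m > 1$, $N \ge 0$, and let $g : [0,T] \to [0,\infty)$ be absolutely continuous satisfying $g'(t) + \frac{1}{m} g(t)^{(m+1)/2} \le N$ for almost every $t \in (0,T]$. Then there exists a constant $C = C(m, N, T)$, independent of $g(0)$, such that $g(t) \le C\, t^{-2/(m-1)}$ for all $t \in (0,T]$. -/
open MeasureTheory Set

set_option maxHeartbeats 2000000 in
theorem stmt9 (m N T : ℝ) (hm : 1 < m) (hN : 0 ≤ N) (hT : 0 < T) :
    ∃ C : ℝ, ∀ g : ℝ → ℝ,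
      (∀ t ∈ Icc (0:ℝ) T, 0 ≤ g t) →
      ContinuousOn g (Icc (0:ℝ) T) →
      (∀ s t : ℝ, 0 ≤ s → s ≤ t → t ≤ T →
        g t - g s ≤ ∫ r in s..t, (N - (1 / m) * g r ^ ((m + 1) / 2))) →
      ∀ t ∈ Ioc (0:ℝ) T, g t ≤ C * t ^ (-(2:ℝ) / (m - 1)) := by
  have hm1 : (0:ℝ) < m - 1 := by linarith
  have hm0 : (0:ℝ) < m := by linarith
  set α : ℝ := 2 / (m - 1) with hαdef
  set β : ℝ := (m + 1) / 2 with hβdef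
  have hα0 : 0 < α := by positivity
  have hβ1 : 1 < β := by rw [hβdef]; linarith
  have hβ0 : 0 < β := by linarith
  clear_value α β
  have hTα : (0:ℝ) < T ^ (α + 1) := Real.rpow_pos_of_pos hT _
  set A : ℝ := α + (N + 1) * T ^ (α + 1) with hAdef
  have hA0 : 0 < A := by positivity
  clear_value A
  set C₁ : ℝ := max 1 ((m * A) ^ (1 / (β - 1))) with hC₁def
  have hC₁1 : 1 ≤ C₁ := le_max_left _ _
  have hC₁0 : (0:ℝ) < C₁ := lt_of_lt_of_le one_pos hC₁1
  have hC₁ge : (m * A) ^ (1 / (β - 1)) ≤ C₁ := le_max_right _ _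
  clear_value C₁
  -- key algebraic inequality on C₁
  have hkey : α * C₁ + (N + 1) * T ^ (α + 1) ≤ (1 / m) * C₁ ^ β := by
    have hmA : (0:ℝ) < m * A := by positivity
    have h1 : m * A ≤ C₁ ^ (β - 1) := by
      have h2 : ((m * A) ^ (1 / (β - 1))) ^ (β - 1) ≤ C₁ ^ (β - 1) :=
        Real.rpow_le_rpow (by positivity) hC₁ge (by linarith)
      rwa [← Real.rpow_mul hmA.le, one_div_mul_cancel (by linarith : β - 1 ≠ 0),
        Real.rpow_one] at h2
    have h3 : C₁ ^ β = C₁ ^ (β - 1) * C₁ := by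
      rw [← Real.rpow_add_one hC₁0.ne' (β - 1)]; ring_nf
    have h4 : m * A * C₁ ≤ C₁ ^ (β - 1) * C₁ :=
      mul_le_mul_of_nonneg_right h1 hC₁0.le
    rw [h3]
    rw [hAdef] at h4
    have h5 : (N + 1) * T ^ (α + 1) ≤ (N + 1) * T ^ (α + 1) * C₁ := by
      nlinarith [mul_nonneg (by linarith : (0:ℝ) ≤ N + 1) hTα.le]
    have h6 : (0:ℝ) < 1 / m := by positivity
    calc α * C₁ + (N + 1) * T ^ (α + 1)
        ≤ α * C₁ + (N + 1) * T ^ (α + 1) * C₁ := by linarith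
      _ = (1 / m) * (m * (α + (N + 1) * T ^ (α + 1)) * C₁) := by field_simp
      _ ≤ (1 / m) * (C₁ ^ (β - 1) * C₁) := by
          apply mul_le_mul_of_nonneg_left _ h6.le
          exact h4
  refine ⟨C₁, ?_⟩
  intro g hg0 hgc hgi
  -- main claim: g t < C₁ * t ^ (-α) on (0, T]
  have main : ∀ t ∈ Ioc (0:ℝ) T, g t < C₁ * t ^ (-α) := by
    by_contra hcon
    push_neg at hcon
    obtain ⟨t₁, ht₁, hle⟩ := hcon
    obtain ⟨M, hM⟩ := isCompact_Icc.exists_bound_of_continuousOn hgc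
    have hgM : ∀ x ∈ Icc (0:ℝ) T, g x ≤ M := fun x hx =>
      le_trans (le_abs_self _) (by simpa [Real.norm_eq_abs] using hM x hx)
    have hM0 : 0 ≤ M := le_trans (hg0 0 ⟨le_refl _, hT.le⟩) (hgM 0 ⟨le_refl _, hT.le⟩)
    set δ : ℝ := min T ((C₁ / (M + 1)) ^ ((1:ℝ) / α)) with hδdef
    have hδ0 : 0 < δ := lt_min hT (Real.rpow_pos_of_pos (by positivity) _)
    have hδT : δ ≤ T := min_le_left _ _
    have hδle : δ ≤ (C₁ / (M + 1)) ^ ((1:ℝ) / α) := min_le_right _ _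
    clear_value δ
    -- on (0, δ], g < φ
    have hsmall : ∀ r ∈ Ioc (0:ℝ) δ, g r < C₁ * r ^ (-α) := by
      intro r hr
      have hr0 : 0 < r := hr.1
      have hrδ : r ≤ δ := hr.2
      have hrα : r ^ α ≤ C₁ / (M + 1) := by
        have h2 : r ^ α ≤ ((C₁ / (M + 1)) ^ ((1:ℝ) / α)) ^ α :=
          Real.rpow_le_rpow hr0.le (le_trans hrδ hδle) hα0.le
        rwa [← Real.rpow_mul (by positivity), one_div_mul_cancel hα0.ne',
          Real.rpow_one] at h2
      have hrαpos : 0 < r ^ α := Real.rpow_pos_of_pos hr0 _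
      have hbig : M + 1 ≤ C₁ * r ^ (-α) := by
        have h7 : M + 1 ≤ C₁ / r ^ α := by
          rw [le_div_iff₀ hrαpos]
          rw [le_div_iff₀ (by positivity : (0:ℝ) < M + 1)] at hrα
          linarith
        rw [Real.rpow_neg hr0.le]
        simpa [div_eq_mul_inv] using h7
      have : g r ≤ M := hgM r ⟨hr0.le, le_trans hrδ hδT⟩
      linarith
    have hδt₁ : δ < t₁ := by
      by_contra hh
      push_neg at hh
      exact absurd hle (not_le.mpr (hsmall t₁ ⟨ht₁.1, hh⟩))
    -- the set where g ≥ φ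
    set S : Set ℝ := Icc δ t₁ ∩ (fun t => g t - C₁ * t ^ (-α)) ⁻¹' Ici 0 with hSdef
    have hsub : Icc δ t₁ ⊆ Icc (0:ℝ) T := Icc_subset_Icc hδ0.le ht₁.2
    have hφcont : ContinuousOn (fun t : ℝ => C₁ * t ^ (-α)) (Icc δ t₁) :=
      continuousOn_const.mul (continuousOn_id.rpow_const
        (fun x hx => Or.inl (ne_of_gt (lt_of_lt_of_le hδ0 hx.1))))
    have hScl : IsClosed S :=
      ContinuousOn.preimage_isClosed_of_isClosed
        ((hgc.mono hsub).sub hφcont) isClosed_Icc isClosed_Ici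
    have hSne : S.Nonempty := ⟨t₁, ⟨hδt₁.le, le_refl _⟩, by simpa using hle⟩
    have hSbd : BddBelow S := ⟨δ, fun x hx => hx.1.1⟩
    set t₀ : ℝ := sInf S with ht₀def
    have ht₀S : t₀ ∈ S := hScl.csInf_mem hSne hSbd
    have hinf : ∀ x ∈ S, t₀ ≤ x := fun x hx => csInf_le hSbd hx
    clear_value t₀
    have ht₀δ : δ ≤ t₀ := ht₀S.1.1
    have ht₀t₁ : t₀ ≤ t₁ := ht₀S.1.2
    have ht₀T : t₀ ≤ T := le_trans ht₀t₁ ht₁.2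
    have ht₀0 : 0 < t₀ := lt_of_lt_of_le hδ0 ht₀δ
    have hφg : C₁ * t₀ ^ (-α) ≤ g t₀ := by
      have := ht₀S.2
      simp only [mem_preimage, mem_Ici] at this
      linarith
    have hδt₀ : δ < t₀ := by
      rcases lt_or_eq_of_le ht₀δ with h | h
      · exact h
      · exact absurd hφg (not_le.mpr (by rw [← h]; exact hsmall δ ⟨hδ0, le_refl _⟩))
    have hless : ∀ r ∈ Ico δ t₀, g r < C₁ * r ^ (-α) := by
      intro r hr
      by_contra hh
      push_neg at hh
      have hrS : r ∈ S := ⟨⟨hr.1, le_trans hr.2.le ht₀t₁⟩, by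
        simp only [mem_preimage, mem_Ici]; linarith⟩
      exact absurd (hinf r hrS) (not_le.mpr hr.2)
    -- continuity of h at t₀ from the left
    set h : ℝ → ℝ := fun r => (1 / m) * ((C₁ * r ^ (-α)) ^ β - g r ^ β) with hhdef
    clear_value h
    have hhc : ContinuousOn h (Icc δ t₀) := by
      rw [hhdef]
      apply continuousOn_const.mul
      apply ContinuousOn.sub
      · exact (hφcont.mono (Icc_subset_Icc (le_refl _) ht₀t₁)).rpow_const
          (fun x hx => Or.inr hβ0.le)
      · exact ((hgc.mono (hsub.trans' (Icc_subset_Icc (le_refl _) ht₀t₁))).rpow_const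
          (fun x hx => Or.inr hβ0.le))
    have hht₀ : h t₀ ≤ 0 := by
      have hφ0 : 0 ≤ C₁ * t₀ ^ (-α) := by positivity
      have := Real.rpow_le_rpow hφ0 hφg hβ0.le
      have h1m : (0:ℝ) < 1 / m := by positivity
      simp only [hhdef]
      nlinarith
    have hcwa : ContinuousWithinAt h (Icc δ t₀) t₀ :=
      hhc t₀ ⟨hδt₀.le, le_refl _⟩
    rw [Metric.continuousWithinAt_iff] at hcwa
    obtain ⟨d, hd0, hd⟩ := hcwa (1/2) (by norm_num)
    set s : ℝ := max δ (t₀ - d / 2) with hsdef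
    have hsδ : δ ≤ s := le_max_left _ _
    have hst₀ : s < t₀ := max_lt hδt₀ (by linarith)
    have hs2 : t₀ - d / 2 ≤ s := le_max_right _ _
    clear_value s
    have hhsmall : ∀ r ∈ Icc s t₀, h r < 1 / 2 := by
      intro r hr
      have hr1 : r ∈ Icc δ t₀ := ⟨le_trans hsδ hr.1, hr.2⟩
      have hdist : dist r t₀ < d := by
        rw [Real.dist_eq, abs_of_nonpos (by linarith [hr.2] : r - t₀ ≤ 0)]
        have := hr.1
        linarith
      have := hd hr1 hdist
      rw [Real.dist_eq] at this
      have := abs_lt.mp this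
      linarith [hht₀, this.1, this.2]
    -- pointwise inequality for integrands
    have hpt : ∀ r ∈ Icc s t₀,
        N - (1 / m) * g r ^ β ≤ C₁ * (-α * r ^ (-α - 1)) - 1 / 2 := by
      intro r hr
      have hr0 : 0 < r := lt_of_lt_of_le hδ0 (le_trans hsδ hr.1)
      have hrT : r ≤ T := le_trans hr.2 ht₀T
      set E : ℝ := r ^ (-α - 1) with hEdef
      have hE0 : 0 < E := Real.rpow_pos_of_pos hr0 _
      have hET : T ^ (-α - 1) ≤ E :=
        Real.rpow_le_rpow_of_nonpos hr0 hrT (by linarith)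
      clear_value E
      have hφβ : (C₁ * r ^ (-α)) ^ β = C₁ ^ β * E := by
        rw [Real.mul_rpow hC₁0.le (Real.rpow_pos_of_pos hr0 _).le,
          ← Real.rpow_mul hr0.le]
        congr 1
        rw [hEdef]
        congr 1
        rw [hαdef, hβdef]
        field_simp
        ring
      have hTinv : T ^ (-α - 1) * T ^ (α + 1) = 1 := by
        rw [← Real.rpow_add hT]; norm_num
      -- E * ((1/m) C₁^β - α C₁) ≥ E * (N+1) T^(α+1) ≥ N+1
      have h1 : (N + 1) * (T ^ (α + 1)) ≤ (1 / m) * C₁ ^ β - α * C₁ := by linarith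
      have h2 : E * ((N + 1) * T ^ (α + 1)) ≤ E * ((1 / m) * C₁ ^ β - α * C₁) :=
        mul_le_mul_of_nonneg_left h1 hE0.le
      have h3 : N + 1 ≤ E * ((N + 1) * T ^ (α + 1)) := by
        have := mul_le_mul_of_nonneg_left hET
          (by positivity : (0:ℝ) ≤ (N + 1) * T ^ (α + 1))
        calc N + 1 = (N + 1) * T ^ (α + 1) * T ^ (-α - 1) := by
              rw [mul_assoc, mul_comm (T ^ (α + 1)), hTinv, mul_one]
          _ ≤ (N + 1) * T ^ (α + 1) * E := by
              exact mul_le_mul_of_nonneg_left hET (by positivity)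
          _ = E * ((N + 1) * T ^ (α + 1)) := by ring
      have h4 : N + 1 ≤ E * (1 / m) * C₁ ^ β - E * (α * C₁) := by
        nlinarith
      -- h r < 1/2 : (1/m)*((C₁ * r^(-α))^β - g r ^ β) < 1/2
      have h5 := hhsmall r hr
      simp only [hhdef] at h5
      rw [hφβ] at h5
      -- goal: N - (1/m) g r^β ≤ C₁ * (-α * E) - 1/2
      have hgoal : C₁ * (-α * E) = -(E * (α * C₁)) := by ring
      rw [hgoal]
      nlinarith [h4, h5]
    -- FTC for φ
    have hderiv : ∀ x ∈ Icc s t₀, HasDerivAt (fun t : ℝ => C₁ * t ^ (-α))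
        (C₁ * (-α * x ^ (-α - 1))) x := by
      intro x hx
      have hx0 : 0 < x := lt_of_lt_of_le hδ0 (le_trans hsδ hx.1)
      exact (Real.hasDerivAt_rpow_const (Or.inl hx0.ne')).const_mul C₁
    have hφ'cont : ContinuousOn (fun x : ℝ => C₁ * (-α * x ^ (-α - 1))) (Icc s t₀) := by
      apply continuousOn_const.mul
      apply continuousOn_const.mul
      exact continuousOn_id.rpow_const
        (fun x hx => Or.inl (ne_of_gt (lt_of_lt_of_le hδ0 (le_trans hsδ hx.1))))
    have hφ'int : IntervalIntegrable (fun x : ℝ => C₁ * (-α * x ^ (-α - 1)))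
        volume s t₀ := by
      apply ContinuousOn.intervalIntegrable
      rwa [uIcc_of_le hst₀.le]
    have hFTC : ∫ x in s..t₀, C₁ * (-α * x ^ (-α - 1)) =
        C₁ * t₀ ^ (-α) - C₁ * s ^ (-α) := by
      apply intervalIntegral.integral_eq_sub_of_hasDerivAt
      · intro x hx
        exact hderiv x (by rwa [uIcc_of_le hst₀.le] at hx)
      · exact hφ'int
    -- integrability of the g-integrand
    have hgβcont : ContinuousOn (fun r : ℝ => N - (1 / m) * g r ^ β) (Icc s t₀) := by
      apply continuousOn_const.sub
      apply continuousOn_const.mul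
      exact (hgc.mono (fun x hx => ⟨le_trans hδ0.le (le_trans hsδ hx.1),
        le_trans hx.2 ht₀T⟩)).rpow_const (fun x hx => Or.inr hβ0.le)
    have hgβint : IntervalIntegrable (fun r : ℝ => N - (1 / m) * g r ^ β)
        volume s t₀ := by
      apply ContinuousOn.intervalIntegrable
      rwa [uIcc_of_le hst₀.le]
    have hφ'int2 : IntervalIntegrable (fun x : ℝ => C₁ * (-α * x ^ (-α - 1)) - 1 / 2)
        volume s t₀ := hφ'int.sub intervalIntegrable_const
    have hmono : (∫ r in s..t₀, (N - (1 / m) * g r ^ β)) ≤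
        ∫ x in s..t₀, (C₁ * (-α * x ^ (-α - 1)) - 1 / 2) := by
      apply intervalIntegral.integral_mono_on hst₀.le hgβint hφ'int2
      intro x hx
      exact hpt x hx
    have hsplit : (∫ x in s..t₀, (C₁ * (-α * x ^ (-α - 1)) - 1 / 2)) =
        (C₁ * t₀ ^ (-α) - C₁ * s ^ (-α)) - (t₀ - s) * (1 / 2) := by
      rw [intervalIntegral.integral_sub hφ'int intervalIntegrable_const, hFTC,
        intervalIntegral.integral_const, smul_eq_mul]
    have hginteq := hgi s t₀ (le_trans hδ0.le hsδ) hst₀.le ht₀T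
    have hgs : g s < C₁ * s ^ (-α) := hless s ⟨hsδ, hst₀⟩
    rw [hsplit] at hmono
    linarith
  intro t ht
  have := main t ht
  have hexp : -(2:ℝ) / (m - 1) = -α := by rw [hαdef]; ring
  rw [hexp]
  exact this.le
end

section
/- Let $m > 1$, $\bar\delta \le \frac{24 m}{(m+1)^2}$, and let $\sigma : (0,1) \times \mathbb{R} \to \mathbb{R}$ satisfy $|\sigma(x,r) - \sigma(x,\bar r)| \le \bar\delta\, |r^{[(m+1)/2]} - \bar r^{[(m+1)/2]}|$ for all $x, r, \bar r$, where $r^{[p]} := |r|^{p-1}r$. Then for all $v_1, v_2 \in L^{m+1}(0,1)$: $\int_0^1 \Big(-2 (v_1 - v_2)(v_1^{[m]} - v_2^{[m]}) + \tfrac{1}{3} |\sigma(x,v_1) - \sigma(x,v_2)|^2\Big) dx \le 0$. -/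
/-!
With `p = (m + 1) / 2`, write `a^[e] - b^[e] = e ∫_b^a |t|^(e-1) dt`. Cauchy–Schwarz on the
interval between `b` and `a` gives `(∫ |t|^(p-1))² ≤ (a - b) ∫ |t|^(m-1)`, and since
`p² · 4m/(m+1)² = m` this is the Stroock–Varopoulos inequality
`(a - b)(a^[m] - b^[m]) ≥ 4m/(m+1)² (a^[p] - b^[p])²`. As `δ/3 ≤ 8m/(m+1)²`, the `σ` term
is then absorbed by the drift term pointwise, so the integrand is nonpositive.
-/

open MeasureTheory Set

open intervalIntegral

theorem intervalIntegrable_abs_rpow {r : ℝ} (hr : -1 < r) (a b : ℝ) :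
    IntervalIntegrable (fun t => |t| ^ r) volume a b := by
  have hnonneg : ∀ c, 0 ≤ c → IntervalIntegrable (fun t => |t| ^ r) volume 0 c := fun c hc =>
    (intervalIntegrable_rpow' hr).congr fun t ht => by
      rw [uIoc_of_le hc] at ht
      simp only [abs_of_pos ht.1]
  have hzero : ∀ c, IntervalIntegrable (fun t => |t| ^ r) volume 0 c := by
    intro c
    rcases le_total 0 c with hc | hc
    · exact hnonneg c hc
    · simpa using (IntervalIntegrable.iff_comp_neg (f := fun t => |t| ^ r)).mp
        (hnonneg (-c) (by linarith))
  exact (hzero a).symm.trans (hzero b)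

theorem opow_of_nonneg_s15 {a e : ℝ} (ha : 0 ≤ a) (he : e ≠ 0) : opow a e = a ^ e := by
  rw [opow, abs_of_nonneg ha, ← Real.rpow_add_one' ha (by simpa using he), sub_add_cancel]

theorem opow_neg_s15 (a e : ℝ) : opow (-a) e = -opow a e := by
  simp only [opow, abs_neg, mul_neg]

theorem opow_eq_mul_integral_abs_rpow {e : ℝ} (he : 0 < e) (a : ℝ) :
    opow a e = e * ∫ t in 0..a, |t| ^ (e - 1) := by
  have hnonneg : ∀ c, 0 ≤ c → opow c e = e * ∫ t in 0..c, |t| ^ (e - 1) := by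
    intro c hc
    have habs : ∫ t in 0..c, |t| ^ (e - 1) = ∫ t in 0..c, t ^ (e - 1) :=
      integral_congr fun t ht => by
        rw [uIcc_of_le hc] at ht
        simp only [abs_of_nonneg ht.1]
    rw [habs, integral_rpow (Or.inl (by linarith)), sub_add_cancel,
      Real.zero_rpow he.ne', sub_zero, opow_of_nonneg_s15 hc he.ne']
    field_simp
  rcases le_total 0 a with ha | ha
  · exact hnonneg a ha
  · have hodd : ∫ t in 0..a, |t| ^ (e - 1) = -∫ t in 0..-a, |t| ^ (e - 1) := by
      simpa [integral_symm a 0] using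
        (integral_comp_neg (a := 0) (b := -a) fun t => |t| ^ (e - 1)).symm
    rw [← neg_neg a, opow_neg_s15, hnonneg (-a) (by linarith), neg_neg, hodd, mul_neg]

theorem opow_sub_opow_eq_mul_integral {e : ℝ} (he : 0 < e) (a b : ℝ) :
    opow a e - opow b e = e * ∫ t in b..a, |t| ^ (e - 1) := by
  rw [opow_eq_mul_integral_abs_rpow he, opow_eq_mul_integral_abs_rpow he, ← mul_sub,
    integral_interval_sub_left (intervalIntegrable_abs_rpow (by linarith) _ _)
      (intervalIntegrable_abs_rpow (by linarith) _ _)]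

theorem sq_intervalIntegral_le_mul_integral_sq_of_le {f : ℝ → ℝ} {a b : ℝ} (hab : a ≤ b)
    (hf : IntervalIntegrable f volume a b)
    (hf2 : IntervalIntegrable (fun t => f t ^ 2) volume a b) :
    (∫ t in a..b, f t) ^ 2 ≤ (b - a) * ∫ t in a..b, f t ^ 2 := by
  rcases hab.eq_or_lt with rfl | hlt
  · simp
  set J := ∫ t in a..b, f t
  set L := b - a
  have hexpand :
      ∫ t in a..b, (L * f t - J) ^ 2 = L * ((L * ∫ t in a..b, f t ^ 2) - J ^ 2) := by
    have hsq : ∀ t, (L * f t - J) ^ 2 = L ^ 2 * f t ^ 2 - 2 * L * J * f t + J ^ 2 := fun t => by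
      ring
    simp only [hsq]
    rw [intervalIntegral.integral_add ((hf2.const_mul _).sub (hf.const_mul _))
        intervalIntegrable_const, intervalIntegral.integral_sub (hf2.const_mul _) (hf.const_mul _),
      intervalIntegral.integral_const_mul, intervalIntegral.integral_const_mul,
      intervalIntegral.integral_const, smul_eq_mul]
    ring
  have hnonneg : 0 ≤ ∫ t in a..b, (L * f t - J) ^ 2 :=
    integral_nonneg hab fun t _ => sq_nonneg _
  rw [hexpand] at hnonneg
  have hL : 0 < L := sub_pos.mpr hlt
  exact sub_nonneg.mp ((mul_nonneg_iff_of_pos_left hL).mp hnonneg)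

theorem sq_intervalIntegral_le_mul_integral_sq {f : ℝ → ℝ} {a b : ℝ}
    (hf : IntervalIntegrable f volume a b)
    (hf2 : IntervalIntegrable (fun t => f t ^ 2) volume a b) :
    (∫ t in a..b, f t) ^ 2 ≤ (b - a) * ∫ t in a..b, f t ^ 2 := by
  rcases le_total a b with hab | hba
  · exact sq_intervalIntegral_le_mul_integral_sq_of_le hab hf hf2
  · have := sq_intervalIntegral_le_mul_integral_sq_of_le hba hf.symm hf2.symm
    rw [integral_symm b a, integral_symm b a, neg_sq]
    linarith

theorem stroock_varopoulos_opow {m : ℝ} (hm : 0 < m) (a b : ℝ) :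
    4 * m / (m + 1) ^ 2 * (opow a ((m + 1) / 2) - opow b ((m + 1) / 2)) ^ 2
      ≤ (a - b) * (opow a m - opow b m) := by
  have hsq : ∀ t : ℝ, (|t| ^ ((m + 1) / 2 - 1)) ^ 2 = |t| ^ (m - 1) := fun t => by
    rw [← Real.rpow_mul_natCast (abs_nonneg t)]
    ring_nf
  have hcs :
      (∫ t in b..a, |t| ^ ((m + 1) / 2 - 1)) ^ 2 ≤ (a - b) * ∫ t in b..a, |t| ^ (m - 1) := by
    simpa only [hsq] using
      sq_intervalIntegral_le_mul_integral_sq (f := fun t => |t| ^ ((m + 1) / 2 - 1))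
      (intervalIntegrable_abs_rpow (by linarith) b a)
      (by simpa only [hsq] using intervalIntegrable_abs_rpow (r := m - 1) (by linarith) b a)
  rw [opow_sub_opow_eq_mul_integral (by linarith) a b, opow_sub_opow_eq_mul_integral hm a b]
  calc _ = m * (∫ t in b..a, |t| ^ ((m + 1) / 2 - 1)) ^ 2 := by
        field_simp
        ring
    _ ≤ m * ((a - b) * ∫ t in b..a, |t| ^ (m - 1)) := by gcongr
    _ = _ := by ring

theorem stmt15_general (m δ : ℝ) (hm : 1 < m) (hδ : δ ≤ 24 * m / (m + 1) ^ 2)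
    (σ : ℝ → ℝ → ℝ)
    (hσ : ∀ x r r' : ℝ, (σ x r - σ x r') ^ 2
      ≤ δ * (opow r ((m + 1) / 2) - opow r' ((m + 1) / 2)) ^ 2)
    (v₁ v₂ : ℝ → ℝ) :
    (∫ x in Ioo (0:ℝ) 1,
      (-2 * (v₁ x - v₂ x) * (opow (v₁ x) m - opow (v₂ x) m)
        + (1/3) * (σ x (v₁ x) - σ x (v₂ x)) ^ 2)) ≤ 0 := by
  refine integral_nonpos fun x => ?_
  set c := 4 * m / (m + 1) ^ 2
  have hδc : δ ≤ 6 * c := by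
    convert hδ using 1
    ring
  set G := (opow (v₁ x) ((m + 1) / 2) - opow (v₂ x) ((m + 1) / 2)) ^ 2
  have hsv : c * G ≤ (v₁ x - v₂ x) * (opow (v₁ x) m - opow (v₂ x) m) :=
    stroock_varopoulos_opow (by linarith) (v₁ x) (v₂ x)
  have hδG : δ * G ≤ 6 * c * G := mul_le_mul_of_nonneg_right hδc (sq_nonneg _)
  have hσx := hσ x (v₁ x) (v₂ x)
  simp only [Pi.zero_apply]
  linarith

theorem stmt15 (m δ : ℝ) (hm : 1 < m) (hδ0 : 0 ≤ δ) (hδ : δ ≤ 24 * m / (m + 1) ^ 2)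
    (σ : ℝ → ℝ → ℝ)
    (hσ : ∀ x r r' : ℝ, (σ x r - σ x r') ^ 2
      ≤ δ * (opow r ((m + 1) / 2) - opow r' ((m + 1) / 2)) ^ 2)
    (v₁ v₂ : ℝ → ℝ) :
    (∫ x in Ioo (0:ℝ) 1,
      (-2 * (v₁ x - v₂ x) * (opow (v₁ x) m - opow (v₂ x) m)
        + (1/3) * (σ x (v₁ x) - σ x (v₂ x)) ^ 2)) ≤ 0 :=
  stmt15_general m δ hm hδ σ hσ v₁ v₂
end
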